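/- arXiv:2106.12705 — 3 statements merged into one kernel-verified Lean document; each statement's English description precedes it below -/
import Mathlib

section
/- In the general noisy-response setting, let Θ ⊆ ℝ^d, let f : Θ → (E → {0,1}) assign to each θ a measurable classifier f_θ, and define for each noise level τ > 0 the performative risk PR_τ(θ) = ∫ 1{y ≠ f_θ(x)} dD_τ(θ)(x,y). Let σ, σ̃ > 0, let θ̂ ∈ Θ be a minimizer of PR_{σ̃} over Θ, and let θ* ∈ Θ be a minimizer of PR_σ over Θ. Then PR_σ(θ̂) − PR_σ(θ*) ≤ √(|σ² − σ̃²|·d / min(σ², σ̃²)). (An error in estimating the noise parameter of noisy response translates into a controlled excess performative risk.) -/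
/-!
Perturbing the noise level only moves the performative risk a little: for every θ,
`|PR_σ θ - PR_σ̃ θ|` is at most the total variation distance between `N(0, σ²I_d)` and
`N(0, σ̃²I_d)`, since `D_σ(θ)` and `D_σ̃(θ)` are images of `D_B ⊗ N(0, ·)` under one map.
By Le Cam's inequality this distance is at most `√(1 - BC²)`, where the Bhattacharyya
coefficient `BC = ∫ √(pq)` of the two Gaussians is computed in closed form,
`BC² = (2σσ̃ / (σ² + σ̃²))^d`. Comparing `θ̂` and `θ*` through `PR_σ̃`, at which `θ̂` is optimal,
costs twice this distance, and Bernoulli's inequality turns `2 √(1 - BC²)` into the stated bound.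
-/

open MeasureTheory ProbabilityTheory

/-- The general noisy-response distribution map: the pushforward of the base distribution
tensored with Gaussian perception noise N(0, σ²I_d) under ((x,y),ξ) ↦ (ρ(x, θ+ξ), y). -/
noncomputable def noisyMapGen {E : Type*} [MeasurableSpace E] {d : ℕ}
    (DB : Measure (E × Bool)) (ρ : E → (Fin d → ℝ) → E) (σ : ℝ) (θ : Fin d → ℝ) :
    Measure (E × Bool) :=
  Measure.map (fun q : (E × Bool) × (Fin d → ℝ) => (ρ q.1.1 (θ + q.2), q.1.2))
    (DB.prod (Measure.pi fun _ : Fin d => gaussianReal 0 ⟨σ ^ 2, sq_nonneg σ⟩))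

/-- Performative risk of the classifier `f θ` under the noisy-response distribution map
with noise level `τ`. -/
noncomputable def noisyPR {E : Type*} [MeasurableSpace E] {d : ℕ}
    (DB : Measure (E × Bool)) (ρ : E → (Fin d → ℝ) → E)
    (f : (Fin d → ℝ) → E → Bool) (τ : ℝ) (θ : Fin d → ℝ) : ℝ :=
  (noisyMapGen DB ρ τ θ {p : E × Bool | f θ p.1 ≠ p.2}).toReal

open Real
open scoped NNReal

section LeCam

variable {α : Type*} [MeasurableSpace α] {μ : Measure α}

lemma abs_setIntegral_le_half_integral_abs {φ : α → ℝ} (hφ : Integrable φ μ)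
    (hφ0 : ∫ x, φ x ∂μ = 0) {S : Set α} (hS : MeasurableSet S) :
    |∫ x in S, φ x ∂μ| ≤ (∫ x, |φ x| ∂μ) / 2 := by
  have hsplit := integral_add_compl hS hφ
  have hsplit_abs := integral_add_compl hS hφ.abs
  have hS_le := abs_le.mp (abs_integral_le_integral_abs (μ := μ.restrict S) (f := φ))
  have hSc_le := abs_le.mp (abs_integral_le_integral_abs (μ := μ.restrict Sᶜ) (f := φ))
  rw [abs_le]
  constructor <;> linarith [hS_le.1, hS_le.2, hSc_le.1, hSc_le.2]

lemma integral_mul_le_sqrt_integral_sq_mul_sqrt_integral_sq {u w : α → ℝ} (hu0 : 0 ≤ u)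
    (hw0 : 0 ≤ w) (hu : MemLp u 2 μ) (hw : MemLp w 2 μ) :
    ∫ x, u x * w x ∂μ ≤ √(∫ x, u x ^ 2 ∂μ) * √(∫ x, w x ^ 2 ∂μ) := by
  have hholder := integral_mul_le_Lp_mul_Lq_of_nonneg (p := 2) (q := 2)
    (holderConjugate_iff.mpr ⟨one_lt_two, by norm_num⟩) (.of_forall hu0) (.of_forall hw0)
    (by simpa using hu) (by simpa using hw)
  simpa only [rpow_two, ← sqrt_eq_rpow] using hholder

lemma memLp_two_sqrt {f : α → ℝ} (hf0 : 0 ≤ f) (hf : Integrable f μ) :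
    MemLp (fun x => √(f x)) 2 μ :=
  (memLp_two_iff_integrable_sq
    (continuous_sqrt.comp_aestronglyMeasurable hf.aestronglyMeasurable)).mpr <| by
    simpa only [sq_sqrt (hf0 _)] using hf

lemma integral_abs_sub_le_two_mul_sqrt_one_sub_sq {f g : α → ℝ} (hf0 : 0 ≤ f) (hg0 : 0 ≤ g)
    (hf : Integrable f μ) (hg : Integrable g μ) (hf1 : ∫ x, f x ∂μ = 1)
    (hg1 : ∫ x, g x ∂μ = 1) :
    ∫ x, |f x - g x| ∂μ ≤ 2 * √(1 - (∫ x, √(f x * g x) ∂μ) ^ 2) := by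
  set u : α → ℝ := fun x => √(f x)
  set w : α → ℝ := fun x => √(g x)
  have hu := memLp_two_sqrt hf0 hf
  have hw := memLp_two_sqrt hg0 hg
  have huw : Integrable (fun x => u x * w x) μ := hu.integrable_mul hw
  have hBC : ∫ x, √(f x * g x) ∂μ = ∫ x, u x * w x ∂μ := by
    simp only [u, w, sqrt_mul (hf0 _)]
  have hsq_u : ∀ x, u x ^ 2 = f x := fun x => sq_sqrt (hf0 x)
  have hsq_w : ∀ x, w x ^ 2 = g x := fun x => sq_sqrt (hg0 x)
  have hfactor : ∀ x, |f x - g x| = |u x - w x| * (u x + w x) := fun x => by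
    rw [← hsq_u, ← hsq_w, sq_sub_sq, abs_mul, mul_comm,
      abs_of_nonneg (add_nonneg (sqrt_nonneg _) (sqrt_nonneg _))]
  have hminus : ∫ x, |u x - w x| ^ 2 ∂μ = 2 - 2 * ∫ x, u x * w x ∂μ := by
    have : ∀ x, |u x - w x| ^ 2 = f x + g x - 2 * (u x * w x) := fun x => by
      rw [sq_abs, ← hsq_u, ← hsq_w]; ring
    simp only [this]
    have hfg : Integrable (fun x => f x + g x) μ := hf.add hg
    rw [integral_sub hfg (huw.const_mul 2), integral_add hf hg, integral_const_mul,
      hf1, hg1, one_add_one_eq_two]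
  have hplus : ∫ x, (u x + w x) ^ 2 ∂μ = 2 + 2 * ∫ x, u x * w x ∂μ := by
    have : ∀ x, (u x + w x) ^ 2 = f x + g x + 2 * (u x * w x) := fun x => by
      rw [← hsq_u, ← hsq_w]; ring
    simp only [this]
    have hfg : Integrable (fun x => f x + g x) μ := hf.add hg
    rw [integral_add hfg (huw.const_mul 2), integral_add hf hg, integral_const_mul,
      hf1, hg1, one_add_one_eq_two]
  have hcs := integral_mul_le_sqrt_integral_sq_mul_sqrt_integral_sq
    (fun x => abs_nonneg (u x - w x)) (fun x => add_nonneg (sqrt_nonneg (f x))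
      (sqrt_nonneg (g x))) (hu.sub hw).abs (hu.add hw)
  have hminus_nonneg : 0 ≤ 2 - 2 * ∫ x, u x * w x ∂μ :=
    hminus ▸ integral_nonneg fun x => sq_nonneg _
  calc ∫ x, |f x - g x| ∂μ = ∫ x, |u x - w x| * (u x + w x) ∂μ := by simp only [hfactor]
    _ ≤ √(2 - 2 * ∫ x, u x * w x ∂μ) * √(2 + 2 * ∫ x, u x * w x ∂μ) := by
      rwa [hminus, hplus] at hcs
    _ = 2 * √(1 - (∫ x, √(f x * g x) ∂μ) ^ 2) := by
      rw [← sqrt_mul hminus_nonneg, hBC,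
        show (2 - 2 * ∫ x, u x * w x ∂μ) * (2 + 2 * ∫ x, u x * w x ∂μ)
          = 2 ^ 2 * (1 - (∫ x, u x * w x ∂μ) ^ 2) by ring,
        sqrt_mul (by norm_num), sqrt_sq (by norm_num)]

lemma abs_setIntegral_sub_le_sqrt_one_sub_sq {f g : α → ℝ} (hf0 : 0 ≤ f) (hg0 : 0 ≤ g)
    (hf : Integrable f μ) (hg : Integrable g μ) (hf1 : ∫ x, f x ∂μ = 1)
    (hg1 : ∫ x, g x ∂μ = 1) {S : Set α} (hS : MeasurableSet S) :
    |∫ x in S, f x ∂μ - ∫ x in S, g x ∂μ| ≤ √(1 - (∫ x, √(f x * g x) ∂μ) ^ 2) := by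
  rw [← integral_sub hf.integrableOn hg.integrableOn]
  have hhalf := abs_setIntegral_le_half_integral_abs (φ := fun x => f x - g x) (hf.sub hg)
    (by rw [integral_sub hf hg, hf1, hg1, sub_self]) hS
  have := integral_abs_sub_le_two_mul_sqrt_one_sub_sq hf0 hg0 hf hg hf1 hg1
  linarith

end LeCam

section Gaussian

variable {m : ℝ} {v₁ v₂ : ℝ≥0}

lemma sqrt_gaussianPDFReal_mul (hv₁ : v₁ ≠ 0) (hv₂ : v₂ ≠ 0) (x : ℝ) :
    √(gaussianPDFReal m v₁ x * gaussianPDFReal m v₂ x) =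
      √(2 * √(v₁ * v₂) / (v₁ + v₂)) * gaussianPDFReal m (2 * v₁ * v₂ / (v₁ + v₂)) x := by
  set w : ℝ≥0 := 2 * v₁ * v₂ / (v₁ + v₂)
  have hw : (w : ℝ) = 2 * v₁ * v₂ / (v₁ + v₂) := by simp [w]
  set s := √((v₁ : ℝ) * v₂)
  have hs : s ^ 2 = v₁ * v₂ := sq_sqrt (by positivity)
  have hs0 : 0 < s := sqrt_pos.mpr (by positivity)
  rw [← sqrt_sq (x := √(2 * s / (v₁ + v₂)) * gaussianPDFReal m w x)
    (by have := gaussianPDFReal_nonneg m w x; positivity)]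
  congr 1
  simp only [gaussianPDFReal, mul_pow, inv_pow, sq_sqrt (by positivity : (0 : ℝ) ≤ 2 * π * w),
    sq_sqrt (by positivity : 0 ≤ 2 * s / (v₁ + v₂)), ← exp_nat_mul]
  have hnorm : √(2 * π * v₁) * √(2 * π * v₂) = 2 * π * s := by
    rw [← sqrt_mul (by positivity), show 2 * π * v₁ * (2 * π * v₂) = (2 * π) ^ 2 * (v₁ * v₂) by
      ring, sqrt_mul (by positivity), sqrt_sq (by positivity)]
  rw [mul_mul_mul_comm, ← mul_inv, hnorm, ← exp_add, hw]
  field_simp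
  rw [hs]
  congr 2
  push_cast
  field_simp
  ring

lemma integral_sqrt_gaussianPDFReal_mul (hv₁ : v₁ ≠ 0) (hv₂ : v₂ ≠ 0) :
    ∫ x, √(gaussianPDFReal m v₁ x * gaussianPDFReal m v₂ x) = √(2 * √(v₁ * v₂) / (v₁ + v₂)) := by
  have hw : 2 * v₁ * v₂ / (v₁ + v₂) ≠ 0 := by positivity
  simp only [sqrt_gaussianPDFReal_mul hv₁ hv₂, integral_const_mul,
    integral_gaussianPDFReal_eq_one m hw, mul_one]

variable {ι : Type*} [Fintype ι]

lemma integrable_pi_gaussianPDFReal (v : ℝ≥0) :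
    Integrable fun x : ι → ℝ => ∏ i, gaussianPDFReal m v (x i) :=
  Integrable.fintype_prod fun _ => integrable_gaussianPDFReal m v

lemma integral_pi_gaussianPDFReal {v : ℝ≥0} (hv : v ≠ 0) :
    ∫ x : ι → ℝ, ∏ i, gaussianPDFReal m v (x i) = 1 := by
  simp [integral_fintype_prod_volume_eq_pow, integral_gaussianPDFReal_eq_one m hv]

lemma integral_sqrt_pi_gaussianPDFReal_mul (hv₁ : v₁ ≠ 0) (hv₂ : v₂ ≠ 0) :
    ∫ x : ι → ℝ, √((∏ i, gaussianPDFReal m v₁ (x i)) * ∏ i, gaussianPDFReal m v₂ (x i)) =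
      √(2 * √(v₁ * v₂) / (v₁ + v₂)) ^ Fintype.card ι := by
  simp only [← Finset.prod_mul_distrib]
  simp only [sqrt_prod _ fun i _ =>
    mul_nonneg (gaussianPDFReal_nonneg m v₁ _) (gaussianPDFReal_nonneg m v₂ _)]
  rw [integral_fintype_prod_volume_eq_pow
    (fun y => √(gaussianPDFReal m v₁ y * gaussianPDFReal m v₂ y)),
    integral_sqrt_gaussianPDFReal_mul hv₁ hv₂]

lemma pi_gaussianReal_eq_withDensity {v : ℝ≥0} (hv : v ≠ 0) :
    Measure.pi (fun _ : ι => gaussianReal m v) =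
      volume.withDensity fun x => ENNReal.ofReal (∏ i, gaussianPDFReal m v (x i)) := by
  refine Measure.pi_eq fun s hs => ?_
  have hbox : (Set.univ.pi s).indicator (fun x : ι → ℝ => ∏ i, gaussianPDFReal m v (x i)) =
      fun x => ∏ i, (s i).indicator (gaussianPDFReal m v) (x i) := by
    ext x
    by_cases h : x ∈ Set.univ.pi s
    · rw [Set.indicator_of_mem h]
      exact Finset.prod_congr rfl fun i _ =>
        (Set.indicator_of_mem (Set.mem_univ_pi.mp h i) _).symm
    · obtain ⟨i, hi⟩ := not_forall.mp (Set.mem_univ_pi.not.mp h)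
      rw [Set.indicator_of_notMem h]
      exact (Finset.prod_eq_zero (Finset.mem_univ i) (Set.indicator_of_notMem hi _)).symm
  rw [withDensity_apply _ (.univ_pi hs), ← ofReal_integral_eq_lintegral_ofReal
    (integrable_pi_gaussianPDFReal v).integrableOn
    (.of_forall fun x => Finset.prod_nonneg fun i _ => gaussianPDFReal_nonneg m v _),
    ← integral_indicator (.univ_pi hs), hbox, integral_fintype_prod_volume_eq_prod,
    ENNReal.ofReal_prod_of_nonneg fun i _ => integral_nonneg fun x =>
      Set.indicator_nonneg (fun y _ => gaussianPDFReal_nonneg m v y) x]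
  simp only [integral_indicator (hs _), gaussianReal_apply_eq_integral m hv]

lemma measureReal_pi_gaussianReal {v : ℝ≥0} (hv : v ≠ 0) {S : Set (ι → ℝ)}
    (hS : MeasurableSet S) :
    (Measure.pi fun _ : ι => gaussianReal m v).real S =
      ∫ x in S, ∏ i, gaussianPDFReal m v (x i) := by
  rw [measureReal_def, pi_gaussianReal_eq_withDensity hv, withDensity_apply _ hS,
    ← ofReal_integral_eq_lintegral_ofReal (integrable_pi_gaussianPDFReal v).integrableOn
      (.of_forall fun x => Finset.prod_nonneg fun i _ => gaussianPDFReal_nonneg m v _),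
    ENNReal.toReal_ofReal (setIntegral_nonneg hS fun x _ =>
      Finset.prod_nonneg fun i _ => gaussianPDFReal_nonneg m v _)]

lemma abs_measureReal_pi_gaussianReal_sub_le (hv₁ : v₁ ≠ 0) (hv₂ : v₂ ≠ 0)
    {S : Set (ι → ℝ)} (hS : MeasurableSet S) :
    |(Measure.pi fun _ : ι => gaussianReal m v₁).real S -
        (Measure.pi fun _ : ι => gaussianReal m v₂).real S| ≤
      √(1 - (2 * √(v₁ * v₂) / (v₁ + v₂)) ^ Fintype.card ι) := by
  have hle := abs_setIntegral_sub_le_sqrt_one_sub_sq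
    (fun x => Finset.prod_nonneg fun i _ => gaussianPDFReal_nonneg m v₁ (x i))
    (fun x => Finset.prod_nonneg fun i _ => gaussianPDFReal_nonneg m v₂ (x i))
    (integrable_pi_gaussianPDFReal v₁) (integrable_pi_gaussianPDFReal v₂)
    (integral_pi_gaussianPDFReal hv₁) (integral_pi_gaussianPDFReal hv₂) hS
  rwa [integral_sqrt_pi_gaussianPDFReal_mul hv₁ hv₂, ← pow_mul, mul_comm (Fintype.card ι), pow_mul,
    sq_sqrt (by positivity), ← measureReal_pi_gaussianReal hv₁ hS,
    ← measureReal_pi_gaussianReal hv₂ hS] at hle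

end Gaussian

lemma abs_measureReal_prod_sub_le {β γ : Type*} [MeasurableSpace β] [MeasurableSpace γ]
    (μ : Measure β) [IsProbabilityMeasure μ] {ν₁ ν₂ : Measure γ} [IsFiniteMeasure ν₁]
    [IsFiniteMeasure ν₂] {c : ℝ} (hc : ∀ s, MeasurableSet s → |ν₁.real s - ν₂.real s| ≤ c)
    {T : Set (β × γ)} (hT : MeasurableSet T) :
    |(μ.prod ν₁).real T - (μ.prod ν₂).real T| ≤ c := by
  have hslice : ∀ (ν : Measure γ) [IsFiniteMeasure ν],
      Integrable (fun x => ν.real (Prod.mk x ⁻¹' T)) μ ∧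
        (μ.prod ν).real T = ∫ x, ν.real (Prod.mk x ⁻¹' T) ∂μ := fun ν _ =>
    ⟨.of_bound (measurable_measure_prodMk_left hT).ennreal_toReal.aestronglyMeasurable
        (ν.real Set.univ) (.of_forall fun x => by
          rw [norm_of_nonneg measureReal_nonneg]; exact measureReal_mono (Set.subset_univ _)),
      by simp only [measureReal_def]
         rw [Measure.prod_apply hT, integral_toReal (measurable_measure_prodMk_left hT).aemeasurable
           (.of_forall fun _ => measure_lt_top _ _)]⟩
  obtain ⟨hint₁, hreal₁⟩ := hslice ν₁
  obtain ⟨hint₂, hreal₂⟩ := hslice ν₂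
  rw [hreal₁, hreal₂, ← integral_sub hint₁ hint₂]
  calc |∫ x, ν₁.real (Prod.mk x ⁻¹' T) - ν₂.real (Prod.mk x ⁻¹' T) ∂μ|
      ≤ ∫ x, |ν₁.real (Prod.mk x ⁻¹' T) - ν₂.real (Prod.mk x ⁻¹' T)| ∂μ :=
        abs_integral_le_integral_abs
    _ ≤ ∫ _, c ∂μ := integral_mono (hint₁.sub hint₂).abs (integrable_const c)
        fun x => hc _ (measurable_prodMk_left hT)
    _ = c := by simp

lemma abs_noisyPR_sub_le {E : Type*} [MeasurableSpace E] {d : ℕ} (DB : Measure (E × Bool))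
    [IsProbabilityMeasure DB] {ρ : E → (Fin d → ℝ) → E}
    (hρ : Measurable fun q : E × (Fin d → ℝ) => ρ q.1 q.2) {f : (Fin d → ℝ) → E → Bool}
    {θ : Fin d → ℝ} (hf : Measurable (f θ)) {σ τ : ℝ} (hσ : 0 < σ) (hτ : 0 < τ) :
    |noisyPR DB ρ f σ θ - noisyPR DB ρ f τ θ| ≤ √(1 - (2 * (σ * τ) / (σ ^ 2 + τ ^ 2)) ^ d) := by
  set respond := fun q : (E × Bool) × (Fin d → ℝ) => (ρ q.1.1 (θ + q.2), q.1.2)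
  have hrespond : Measurable respond :=
    (hρ.comp (measurable_fst.fst.prodMk (measurable_const.add measurable_snd))).prodMk
      measurable_fst.snd
  have herr : MeasurableSet {p : E × Bool | f θ p.1 ≠ p.2} :=
    (measurableSet_eq_fun (hf.comp measurable_fst) measurable_snd).compl
  set v₁ : ℝ≥0 := ⟨σ ^ 2, sq_nonneg σ⟩
  set v₂ : ℝ≥0 := ⟨τ ^ 2, sq_nonneg τ⟩
  have hPR₁ : noisyPR DB ρ f σ θ = (DB.prod (Measure.pi fun _ : Fin d => gaussianReal 0 v₁)).real
      (respond ⁻¹' {p | f θ p.1 ≠ p.2}) := by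
    rw [noisyPR, noisyMapGen, Measure.map_apply hrespond herr]
    rfl
  have hPR₂ : noisyPR DB ρ f τ θ = (DB.prod (Measure.pi fun _ : Fin d => gaussianReal 0 v₂)).real
      (respond ⁻¹' {p | f θ p.1 ≠ p.2}) := by
    rw [noisyPR, noisyMapGen, Measure.map_apply hrespond herr]
    rfl
  have hv₁ : v₁ ≠ 0 := NNReal.coe_ne_zero.mp (pow_pos hσ 2).ne'
  have hv₂ : v₂ ≠ 0 := NNReal.coe_ne_zero.mp (pow_pos hτ 2).ne'
  have hbound := abs_measureReal_prod_sub_le DB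
    (fun s hs => abs_measureReal_pi_gaussianReal_sub_le (m := 0) hv₁ hv₂ hs) (hrespond herr)
  have hgeo : √((v₁ : ℝ) * v₂) = σ * τ := by
    rw [← sqrt_sq (mul_pos hσ hτ).le, mul_pow]
    rfl
  rwa [hgeo, Fintype.card_fin, ← hPR₁, ← hPR₂] at hbound

lemma one_sub_pow_le_mul_one_sub {r : ℝ} (hr : 0 ≤ r) (n : ℕ) : 1 - r ^ n ≤ n * (1 - r) := by
  have := one_add_mul_le_pow (a := r - 1) (by linarith) n
  rw [add_sub_cancel] at this
  linarith

lemma four_mul_one_sub_le_abs_sq_sub_div_min {σ τ : ℝ} (hσ : 0 < σ) (hτ : 0 < τ) :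
    4 * (1 - 2 * (σ * τ) / (σ ^ 2 + τ ^ 2)) ≤ |σ ^ 2 - τ ^ 2| / min (σ ^ 2) (τ ^ 2) := by
  wlog hτσ : τ ≤ σ generalizing σ τ
  · have := this hτ hσ (le_of_not_ge hτσ)
    rwa [abs_sub_comm, min_comm, add_comm, mul_comm τ] at this
  rw [abs_of_nonneg (by nlinarith), min_eq_right (by nlinarith),
    show 1 - 2 * (σ * τ) / (σ ^ 2 + τ ^ 2) = (σ - τ) ^ 2 / (σ ^ 2 + τ ^ 2) by field_simp; ring,
    mul_div_assoc', div_le_div_iff₀ (by positivity) (by positivity)]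
  nlinarith [mul_nonneg (mul_nonneg (sub_nonneg.mpr hτσ) (sq_nonneg (σ - τ)))
      (by positivity : 0 ≤ σ + 3 * τ),
    mul_nonneg (sub_nonneg.mpr hτσ) (by positivity : 0 ≤ 2 * σ * τ ^ 2 + 2 * τ ^ 3)]

lemma two_mul_sqrt_one_sub_pow_le {σ τ : ℝ} (hσ : 0 < σ) (hτ : 0 < τ) (d : ℕ) :
    2 * √(1 - (2 * (σ * τ) / (σ ^ 2 + τ ^ 2)) ^ d) ≤
      √(|σ ^ 2 - τ ^ 2| * d / min (σ ^ 2) (τ ^ 2)) := by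
  have hr : 0 ≤ 2 * (σ * τ) / (σ ^ 2 + τ ^ 2) := by positivity
  calc 2 * √(1 - (2 * (σ * τ) / (σ ^ 2 + τ ^ 2)) ^ d)
      = √(4 * (1 - (2 * (σ * τ) / (σ ^ 2 + τ ^ 2)) ^ d)) := by
        rw [sqrt_mul zero_le_four, show (4 : ℝ) = 2 ^ 2 by norm_num, sqrt_sq zero_le_two]
    _ ≤ √(d * (4 * (1 - 2 * (σ * τ) / (σ ^ 2 + τ ^ 2)))) :=
        sqrt_le_sqrt (by nlinarith [one_sub_pow_le_mul_one_sub hr d])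
    _ ≤ √(|σ ^ 2 - τ ^ 2| * d / min (σ ^ 2) (τ ^ 2)) := by
        rw [mul_comm |σ ^ 2 - τ ^ 2|, mul_div_assoc (d : ℝ)]
        exact sqrt_le_sqrt (mul_le_mul_of_nonneg_left
          (four_mul_one_sub_le_abs_sq_sub_div_min hσ hτ) d.cast_nonneg)

theorem stmt15_general {E : Type*} [MeasurableSpace E] {d : ℕ}
    (DB : Measure (E × Bool)) [IsProbabilityMeasure DB]
    (ρ : E → (Fin d → ℝ) → E)
    (hρ : Measurable fun q : E × (Fin d → ℝ) => ρ q.1 q.2)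
    (Θ : Set (Fin d → ℝ)) (f : (Fin d → ℝ) → E → Bool)
    (hf : ∀ θ ∈ Θ, Measurable (f θ))
    (σ σt : ℝ) (hσ : 0 < σ) (hσt : 0 < σt)
    (θhat θstar : Fin d → ℝ) (hθhat : θhat ∈ Θ) (hθstar : θstar ∈ Θ)
    (hmin_hat : ∀ θ ∈ Θ, noisyPR DB ρ f σt θhat ≤ noisyPR DB ρ f σt θ) :
    noisyPR DB ρ f σ θhat - noisyPR DB ρ f σ θstar ≤
      Real.sqrt (|σ ^ 2 - σt ^ 2| * d / min (σ ^ 2) (σt ^ 2)) := by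
  have hhat := abs_le.mp (abs_noisyPR_sub_le DB hρ (hf θhat hθhat) hσ hσt)
  have hstar := abs_le.mp (abs_noisyPR_sub_le DB hρ (hf θstar hθstar) hσ hσt)
  linarith [hmin_hat θstar hθstar, two_mul_sqrt_one_sub_pow_le hσ hσt d]

/-- Corollary 3 (an error in estimating the noise parameter of noisy
response translates into a controlled excess performative risk). -/
theorem stmt15 {E : Type*} [MeasurableSpace E] {d : ℕ}
    (DB : Measure (E × Bool)) [IsProbabilityMeasure DB]
    (ρ : E → (Fin d → ℝ) → E)
    (hρ : Measurable fun q : E × (Fin d → ℝ) => ρ q.1 q.2)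
    (Θ : Set (Fin d → ℝ)) (f : (Fin d → ℝ) → E → Bool)
    (hf : ∀ θ ∈ Θ, Measurable (f θ))
    (σ σt : ℝ) (hσ : 0 < σ) (hσt : 0 < σt)
    (θhat θstar : Fin d → ℝ) (hθhat : θhat ∈ Θ) (hθstar : θstar ∈ Θ)
    (hmin_hat : ∀ θ ∈ Θ, noisyPR DB ρ f σt θhat ≤ noisyPR DB ρ f σt θ)
    (hmin_star : ∀ θ ∈ Θ, noisyPR DB ρ f σ θstar ≤ noisyPR DB ρ f σ θ) :
    noisyPR DB ρ f σ θhat - noisyPR DB ρ f σ θstar ≤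
      Real.sqrt (|σ ^ 2 - σt ^ 2| * d / min (σ ^ 2) (σt ^ 2)) :=
  stmt15_general DB ρ hρ Θ f hf σ σt hσ hσt θhat θstar hθhat hθstar hmin_hat
end

section
/- Let c : ℝ × ℝ → ℝ be a valid cost function and define the response to a perceived threshold by r(x,t) = x if t ≤ x, r(x,t) = t if t > x and c(x,t) ≤ 1, and r(x,t) = x otherwise. Then: (a) for all x, t ∈ ℝ, c(x, r(x,t)) ≤ 1 (an agent never expends more than the utility γ = 1 of a positive outcome); and (b) for all x, η, θ, θ' ∈ ℝ with θ' ≤ θ, if r(x, θ+η) ≥ θ then r(x, θ'+η) ≥ θ' (an agent who is positively classified at threshold θ is also positively classified at every lower threshold θ'). That is, noisy response satisfies expenditure monotonicity. -/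
/-- Response of an agent with features `x` to a perceived threshold `t` (utility of
positive classification γ = 1). -/
noncomputable def respond (c : ℝ → ℝ → ℝ) (x t : ℝ) : ℝ :=
  if t ≤ x then x else if c x t ≤ 1 then t else x

/-- Proposition 9 (noisy response satisfies expenditure monotonicity):
(a) an agent never expends more than the utility of a positive outcome, and (b) an agent
who is positively classified at a threshold θ is also positively classified at every
lower threshold θ' (with the same perception noise η). -/
theorem stmt17 (c : ℝ → ℝ → ℝ)
    (hc_cont : Continuous fun p : ℝ × ℝ => c p.1 p.2)
    (hc_zero : ∀ x, c x x = 0)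
    (hc_between : ∀ x xP z : ℝ, min x xP < z → z < max x xP →
      c x z < c x xP ∧ c z x < c xP x) :
    (∀ x t : ℝ, c x (respond c x t) ≤ 1) ∧
    (∀ x η θ θ' : ℝ, θ' ≤ θ → θ ≤ respond c x (θ + η) → θ' ≤ respond c x (θ' + η)) := by
  constructor
  · intro x t
    unfold respond
    split_ifs with h1 h2
    · simp [hc_zero]
    · exact h2
    · simp [hc_zero]
  · intro x η θ θ' hle h
    unfold respond at h ⊢
    split_ifs with h1 h2
    · -- θ' + η ≤ x : need θ' ≤ x
      split_ifs at h with h3 h4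
      · linarith
      · -- respond = θ + η ≥ θ so η ≥ 0
        linarith
      · linarith
    · -- x < θ' + η, c x (θ'+η) ≤ 1 : need θ' ≤ θ' + η, i.e. η ≥ 0
      push_neg at h1
      split_ifs at h with h3 h4
      · -- θ + η ≤ x : then θ ≤ x < θ'+η ≤ θ+η, contradiction
        linarith
      · linarith
      · -- c x (θ+η) > 1, respond = x, θ ≤ x < θ'+η
        linarith
    · -- x < θ' + η, c x (θ'+η) > 1 : show c x (θ+η) > 1 so respond at θ was x, θ ≤ x
      push_neg at h1 h2
      split_ifs at h with h3 h4
      · linarith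
      · -- c x (θ+η) ≤ 1; but x < θ'+η ≤ θ+η
        rcases eq_or_lt_of_le (show θ' + η ≤ θ + η by linarith) with he | hlt
        · rw [he] at h2; linarith
        · have := (hc_between x (θ + η) (θ' + η)
            ((min_le_left _ _).trans_lt h1)
            (hlt.trans_le (le_max_right _ _))).1
          linarith
      · linarith
end

section
/- In the acceptance-rate model, assume β has no atoms and that q satisfies both the downward and the upward expenditure constraints. Let s' < θ_SL with c(θ_SL, s') = 1, let s'' < s' with c(s'', s') = 1, and let l < s'' with c(s'', l) = 1; let t' > θ_SL with c(θ_SL, t') = 1, let t'' > t' with c(t'', t') = 1, and let u > t'' with c(t'', u) = 1; and assume s', t' ∈ Θ. Then for every θ ∈ Θ with θ ≥ u, PR(t') ≤ PR(θ), and for every θ ∈ Θ with θ ≤ l, PR(s') ≤ PR(θ). Consequently, if PR attains its minimum over Θ, then it attains its minimum at some point of the interval [l, u] (the pruned search space Θ₀ = [l,u] contains a performatively optimal point). -/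
open MeasureTheory Set

/-- Performative risk of the threshold classifier `1{· ≥ θ}` when an agent with true
features `x` is accepted with probability `q θ x` after strategically responding. -/
noncomputable def PRacc (β : Measure ℝ) (μ : ℝ → ℝ) (q : ℝ → ℝ → ℝ) (θ : ℝ) : ℝ :=
  ∫ x, (q θ x * (1 - μ x) + (1 - q θ x) * μ x) ∂β

/-- Proposition 10 (the pruned search space Θ₀ = [l,u] contains a
performatively optimal point): under the downward and upward expenditure constraints,
every threshold above u is dominated by t' and every threshold below l is dominated
by s', so a minimizer of the performative risk can be found in [l,u]. -/
theorem stmt18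
    (c : ℝ → ℝ → ℝ) (hc_cont : Continuous fun p : ℝ × ℝ => c p.1 p.2)
    (hc_zero : ∀ x, c x x = 0)
    (hc_between : ∀ x xP z : ℝ, min x xP < z → z < max x xP →
      c x z < c x xP ∧ c z x < c xP x)
    (β : Measure ℝ) (hβprob : IsProbabilityMeasure β)
    (μ : ℝ → ℝ) (hμ_cont : Continuous μ) (hμ_mono : StrictMono μ)
    (hμ_range : ∀ x, μ x ∈ Icc (0:ℝ) 1)
    (θSL : ℝ) (hhalf : μ θSL = 1/2)
    (Θ : Set ℝ) (q : ℝ → ℝ → ℝ)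
    (hq_meas : ∀ θ, Measurable (q θ))
    (hq_range : ∀ θ x, q θ x ∈ Icc (0:ℝ) 1)
    (hq_down : ∀ θ ∈ Θ, ∀ x, x < θ → 1 < c x θ → q θ x = 0)
    (hq_up : ∀ θ ∈ Θ, ∀ x, θ ≤ x → (∀ xP, xP < θ → 1 < c x xP) → q θ x = 1)
    (hβatoms : ∀ x : ℝ, β {x} = 0)
    (s' s'' l t' t'' u : ℝ)
    (hs' : s' < θSL ∧ c θSL s' = 1) (hs'' : s'' < s' ∧ c s'' s' = 1)
    (hl : l < s'' ∧ c s'' l = 1)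
    (ht' : θSL < t' ∧ c θSL t' = 1) (ht'' : t' < t'' ∧ c t'' t' = 1)
    (hu : t'' < u ∧ c t'' u = 1)
    (hs'Θ : s' ∈ Θ) (ht'Θ : t' ∈ Θ) :
    (∀ θ ∈ Θ, u ≤ θ → PRacc β μ q t' ≤ PRacc β μ q θ) ∧
    (∀ θ ∈ Θ, θ ≤ l → PRacc β μ q s' ≤ PRacc β μ q θ) ∧
    ((∃ θm ∈ Θ, ∀ θ ∈ Θ, PRacc β μ q θm ≤ PRacc β μ q θ) →
      ∃ θm ∈ Θ, θm ∈ Icc l u ∧ ∀ θ ∈ Θ, PRacc β μ q θm ≤ PRacc β μ q θ) := by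
  obtain ⟨hs'1, hs'2⟩ := hs'
  obtain ⟨hs''1, hs''2⟩ := hs''
  obtain ⟨hl1, hl2⟩ := hl
  obtain ⟨ht'1, ht'2⟩ := ht'
  obtain ⟨ht''1, ht''2⟩ := ht''
  obtain ⟨hu1, hu2⟩ := hu
  -- integrability of the risk integrand
  have hint : ∀ θ, Integrable (fun x => q θ x * (1 - μ x) + (1 - q θ x) * μ x) β := by
    intro θ
    refine ⟨(((hq_meas θ).mul (measurable_const.sub hμ_cont.measurable)).add
      ((measurable_const.sub (hq_meas θ)).mul hμ_cont.measurable)).aestronglyMeasurable, ?_⟩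
    apply HasFiniteIntegral.of_bounded (C := (2:ℝ))
    filter_upwards with x
    have h1 := hq_range θ x
    have h2 := hμ_range x
    rw [Real.norm_eq_abs, abs_le]
    constructor <;> nlinarith [h1.1, h1.2, h2.1, h2.2]
  have haeNe : ∀ᵐ x ∂β, x ≠ θSL := by
    rw [ae_iff]
    convert hβatoms θSL using 2
    ext x; simp
  -- generic comparison lemma
  have key : ∀ θ1 θ2, (∀ x, x ≠ θSL → (q θ1 x - q θ2 x) * (1 - 2 * μ x) ≤ 0) →
      PRacc β μ q θ1 ≤ PRacc β μ q θ2 := by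
    intro θ1 θ2 hpt
    unfold PRacc
    apply integral_mono_ae (hint θ1) (hint θ2)
    filter_upwards [haeNe] with x hx
    have := hpt x hx
    nlinarith
  have hμlt : ∀ x, x < θSL → μ x < 1/2 := fun x h => hhalf ▸ hμ_mono h
  have hμgt : ∀ x, θSL < x → 1/2 < μ x := fun x h => hhalf ▸ hμ_mono h
  have part1 : ∀ θ ∈ Θ, u ≤ θ → PRacc β μ q t' ≤ PRacc β μ q θ := by
    intro θ hθΘ hθu
    apply key
    intro x hx
    rcases lt_trichotomy x θSL with hxl | hxe | hxr
    · -- x < θSL : q t' x = 0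
      have hq0 : q t' x = 0 := by
        apply hq_down t' ht'Θ x (hxl.trans ht'1)
        have h := (hc_between t' x θSL (min_lt_iff.mpr (Or.inr hxl))
          (lt_max_iff.mpr (Or.inl ht'1))).2
        linarith
      have := (hq_range θ x).1
      have := hμlt x hxl
      nlinarith
    · exact absurd hxe hx
    · rcases lt_or_ge x t'' with hxt | hxt
      · -- θSL < x < t'' : q θ x = 0
        have hcxu : 1 < c x u := by
          have h := (hc_between u x t'' (min_lt_iff.mpr (Or.inr hxt))
            (lt_max_iff.mpr (Or.inl hu1))).2
          linarith
        have hq0 : q θ x = 0 := by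
          apply hq_down θ hθΘ x (lt_of_lt_of_le (hxt.trans hu1) hθu)
          rcases eq_or_lt_of_le hθu with h | h
          · rwa [← h]
          · have h2 := (hc_between x θ u (min_lt_iff.mpr (Or.inl (hxt.trans hu1)))
              (lt_max_iff.mpr (Or.inr h))).1
            linarith
        have := (hq_range t' x).1
        have := hμgt x hxr
        nlinarith
      · -- t'' ≤ x : q t' x = 1
        have hq1 : q t' x = 1 := by
          apply hq_up t' ht'Θ x (le_trans ht''1.le hxt)
          intro xP hxP
          have h1 := (hc_between t'' xP t' (min_lt_iff.mpr (Or.inr hxP))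
            (lt_max_iff.mpr (Or.inl ht''1))).1
          rcases eq_or_lt_of_le hxt with h | h
          · rw [← h]; linarith
          · have h2 := (hc_between xP x t'' (min_lt_iff.mpr (Or.inl (hxP.trans ht''1)))
              (lt_max_iff.mpr (Or.inr h))).2
            linarith
        have := (hq_range θ x).2
        have := hμgt x hxr
        nlinarith
  have part2 : ∀ θ ∈ Θ, θ ≤ l → PRacc β μ q s' ≤ PRacc β μ q θ := by
    intro θ hθΘ hθl
    apply key
    intro x hx
    rcases lt_trichotomy x θSL with hxl | hxe | hxr
    · rcases le_or_gt s'' x with hxs | hxs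
      · -- s'' ≤ x < θSL : q θ x = 1
        have hq1 : q θ x = 1 := by
          apply hq_up θ hθΘ x (le_trans hθl (hl1.le.trans hxs))
          intro xP hxP
          have hxPl : xP < l := lt_of_lt_of_le hxP hθl
          have h1 := (hc_between s'' xP l (min_lt_iff.mpr (Or.inr hxPl))
            (lt_max_iff.mpr (Or.inl hl1))).1
          rcases eq_or_lt_of_le hxs with h | h
          · rw [← h]; linarith
          · have h2 := (hc_between xP x s'' (min_lt_iff.mpr (Or.inl (hxPl.trans hl1)))
              (lt_max_iff.mpr (Or.inr h))).2
            linarith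
        have := (hq_range s' x).2
        have := hμlt x hxl
        nlinarith
      · -- x < s'' : q s' x = 0
        have hq0 : q s' x = 0 := by
          apply hq_down s' hs'Θ x (hxs.trans hs''1)
          have h1 := (hc_between s' x s'' (min_lt_iff.mpr (Or.inr hxs))
            (lt_max_iff.mpr (Or.inl hs''1))).2
          linarith
        have := (hq_range θ x).1
        have := hμlt x hxl
        nlinarith
    · exact absurd hxe hx
    · -- θSL < x : q s' x = 1
      have hq1 : q s' x = 1 := by
        apply hq_up s' hs'Θ x (le_of_lt (hs'1.trans hxr))
        intro xP hxP
        have h1 := (hc_between θSL xP s' (min_lt_iff.mpr (Or.inr hxP))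
          (lt_max_iff.mpr (Or.inl hs'1))).1
        have h2 := (hc_between xP x θSL (min_lt_iff.mpr (Or.inl (hxP.trans hs'1)))
          (lt_max_iff.mpr (Or.inr hxr))).2
        linarith
      have := (hq_range θ x).2
      have := hμgt x hxr
      nlinarith
  refine ⟨part1, part2, ?_⟩
  rintro ⟨θm, hθmΘ, hmin⟩
  rcases le_or_gt l θm with hlo | hlo
  · rcases le_or_gt θm u with hhi | hhi
    · exact ⟨θm, hθmΘ, ⟨hlo, hhi⟩, hmin⟩
    · refine ⟨t', ht'Θ, ⟨by linarith, by linarith⟩, fun θ hθ => ?_⟩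
      exact le_trans (part1 θm hθmΘ hhi.le) (hmin θ hθ)
  · refine ⟨s', hs'Θ, ⟨by linarith, by linarith⟩, fun θ hθ => ?_⟩
    exact le_trans (part2 θm hθmΘ hlo.le) (hmin θ hθ)
end
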